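/- (Determining equation) Let a ∈ ℝ_{>0}^{3+3n}, λ ∈ ℝ_{>0}^{3n}, and let ξ > 0 satisfy ξ ≠ ξ* and θ(ξ) = 0. Set g = (g1(ξ), ξ, g3(ξ)). Then g ∈ ℝ_{>0}^3 and b := diag(g^L) a is a positive steady state of ẋ = S diag(κ(a,λ)) Φ(x) satisfying Z b = Z a; if in addition ξ ≠ 1, then b ≠ a. Moreover, distinct such zeros ξ of θ yield distinct steady states b. -/

import Mathlib

open Finset

namespace Phos

noncomputable section

/-- Standard basis vector of `ℝ^N`, with `1`-based index `j`. -/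
def e (N : ℕ) (j : ℕ) : Fin N → ℝ := fun m => if (m : ℕ) + 1 = j then 1 else 0

/-- Standard basis vector of `ℕ^N`, with `1`-based index `j`. -/
def eN (N : ℕ) (j : ℕ) : Fin N → ℕ := fun m => if (m : ℕ) + 1 = j then 1 else 0

/-- The stoichiometric matrix `S` of the `n`-site sequential distributive
phosphorylation network.  For each `i = 1,…,n` the six columns `6(i−1)+1,…,6(i−1)+6`
are `e_{1+3i}−e_1−e_{3i−1}`, `e_1+e_{3i−1}−e_{1+3i}`, `e_1+e_{2+3i}−e_{1+3i}`,
`e_{3+3i}−e_3−e_{2+3i}`, `e_3+e_{2+3i}−e_{3+3i}`, `e_3+e_{3i−1}−e_{3+3i}`. -/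
def Smat (n : ℕ) : Matrix (Fin (3*n+3)) (Fin (6*n)) ℝ :=
  Matrix.of fun m r =>
    (![e (3*n+3) (1+3*((r : ℕ)/6+1)) - e (3*n+3) 1 - e (3*n+3) (3*((r : ℕ)/6+1)-1),
       e (3*n+3) 1 + e (3*n+3) (3*((r : ℕ)/6+1)-1) - e (3*n+3) (1+3*((r : ℕ)/6+1)),
       e (3*n+3) 1 + e (3*n+3) (2+3*((r : ℕ)/6+1)) - e (3*n+3) (1+3*((r : ℕ)/6+1)),
       e (3*n+3) (3+3*((r : ℕ)/6+1)) - e (3*n+3) 3 - e (3*n+3) (2+3*((r : ℕ)/6+1)),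
       e (3*n+3) 3 + e (3*n+3) (2+3*((r : ℕ)/6+1)) - e (3*n+3) (3+3*((r : ℕ)/6+1)),
       e (3*n+3) 3 + e (3*n+3) (3*((r : ℕ)/6+1)-1) - e (3*n+3) (3+3*((r : ℕ)/6+1))])
      ⟨(r : ℕ) % 6, Nat.mod_lt _ (by norm_num)⟩ m

/-- The rate exponent matrix `Y`: for each `i = 1,…,n` the six columns
`6(i−1)+1,…,6(i−1)+6` are `e_1+e_{3i−1}`, `e_{1+3i}`, `e_{1+3i}`,
`e_3+e_{2+3i}`, `e_{3+3i}`, `e_{3+3i}`. -/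
def Ymat (n : ℕ) : Matrix (Fin (3*n+3)) (Fin (6*n)) ℕ :=
  Matrix.of fun m r =>
    (![eN (3*n+3) 1 + eN (3*n+3) (3*((r : ℕ)/6+1)-1),
       eN (3*n+3) (1+3*((r : ℕ)/6+1)),
       eN (3*n+3) (1+3*((r : ℕ)/6+1)),
       eN (3*n+3) 3 + eN (3*n+3) (2+3*((r : ℕ)/6+1)),
       eN (3*n+3) (3+3*((r : ℕ)/6+1)),
       eN (3*n+3) (3+3*((r : ℕ)/6+1))])
      ⟨(r : ℕ) % 6, Nat.mod_lt _ (by norm_num)⟩ m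

/-- The monomial map `Φ(x)_j = ∏ₘ xₘ^{Y_{mj}}`. -/
def Phi (n : ℕ) (x : Fin (3*n+3) → ℝ) : Fin (6*n) → ℝ :=
  fun r => ∏ m, x m ^ (Ymat n m r)

/-- The conservation matrix `Z` (rows `z1, z2, z3`). -/
def Zmat (n : ℕ) : Matrix (Fin 3) (Fin (3*n+3)) ℝ :=
  Matrix.of fun r j =>
    if (r : ℕ) = 0 then (if (j : ℕ) % 3 = 0 then 1 else 0)
    else if (r : ℕ) = 1 then
      (if (j : ℕ) % 3 = 1 then 1 else if (j : ℕ) = 0 ∨ (j : ℕ) = 2 then -1 else 0)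
    else (if (j : ℕ) % 3 = 2 then 1 else 0)

/-- The `6 × 3` block `E0`. -/
def E0 : Fin 6 → Fin 3 → ℝ :=
  ![![1,0,1], ![1,0,0], ![0,0,1], ![0,1,1], ![0,1,0], ![0,0,1]]

/-- The block diagonal matrix `E` with `n` copies of `E0`. -/
def Emat (n : ℕ) : Matrix (Fin (6*n)) (Fin (3*n)) ℝ :=
  Matrix.of fun r c =>
    if (r : ℕ) / 6 = (c : ℕ) / 3 then
      E0 ⟨(r : ℕ) % 6, Nat.mod_lt _ (by norm_num)⟩ ⟨(c : ℕ) % 3, Nat.mod_lt _ (by norm_num)⟩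
    else 0

/-- The matrix `L ∈ ℤ^{(3+3n)×3}`: row `1 = (1, n−1, −1)`, row `2 = (−1, −n, 0)`,
row `3 = (1, n−2, −1)`, and for `i = 1,…,n` rows `1+3i` and `3+3i` equal
`(0, i−2, −1)` while row `2+3i = (−1, i−n, 0)`. -/
def Lmat (n : ℕ) : Matrix (Fin (3*n+3)) (Fin 3) ℤ :=
  Matrix.of fun j c =>
    if (j : ℕ) = 0 then ![1, (n : ℤ) - 1, -1] c
    else if (j : ℕ) = 1 then ![-1, -(n : ℤ), 0] c
    else if (j : ℕ) = 2 then ![1, (n : ℤ) - 2, -1] c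
    else if (j : ℕ) % 3 = 1 then ![-1, (((j : ℕ) / 3 : ℕ) : ℤ) - (n : ℤ), 0] c
    else ![0, (((j : ℕ) / 3 : ℕ) : ℤ) - 2, -1] c

/-- `g^L ∈ ℝ_{>0}^{3+3n}`, `(g^L)_j = g₁^{L_{j1}} g₂^{L_{j2}} g₃^{L_{j3}}`. -/
def gL (n : ℕ) (g : Fin 3 → ℝ) : Fin (3*n+3) → ℝ :=
  fun j => ∏ c, g c ^ (Lmat n j c)

/-- The coset condition map `Θ(g,a) = Z diag(a) (g^L − 𝟙)`. -/
def Theta (n : ℕ) (g : Fin 3 → ℝ) (a : Fin (3*n+3) → ℝ) : Fin 3 → ℝ :=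
  (Zmat n).mulVec (fun j => a j * (gL n g j - 1))

/-- The rate constants `κ(a,λ)_j = (Eλ)_j / Φ(a)_j`. -/
def kappaOf (n : ℕ) (a : Fin (3*n+3) → ℝ) (lam : Fin (3*n) → ℝ) : Fin (6*n) → ℝ :=
  fun r => (Emat n).mulVec lam r / Phi n a r

/-- `x` is a (positive) steady state of `ẋ = S diag(κ) Φ(x)`. -/
def isSteady (n : ℕ) (κ : Fin (6*n) → ℝ) (x : Fin (3*n+3) → ℝ) : Prop :=
  (Smat n).mulVec (fun r => κ r * Phi n x r) = 0

/-- The `1`-based component `a_j` of a vector `a ∈ ℝ^{3+3n}`. -/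
def av (n : ℕ) (a : Fin (3*n+3) → ℝ) (j : ℕ) : ℝ :=
  if h : j - 1 < 3*n+3 then a ⟨j - 1, h⟩ else 0

/-- `ω1 = Σ_{k=0}^n a_{1+3k}`. -/
def om1 (n : ℕ) (a : Fin (3*n+3) → ℝ) : ℝ := ∑ k ∈ Finset.range (n+1), av n a (1+3*k)

/-- `ω2 = −a₁ − a₃ + Σ_{k=0}^n a_{2+3k}`. -/
def om2 (n : ℕ) (a : Fin (3*n+3) → ℝ) : ℝ :=
  -(av n a 1) - av n a 3 + ∑ k ∈ Finset.range (n+1), av n a (2+3*k)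

/-- `ω3 = Σ_{k=0}^n a_{3+3k}`. -/
def om3 (n : ℕ) (a : Fin (3*n+3) → ℝ) : ℝ := ∑ k ∈ Finset.range (n+1), av n a (3+3*k)

/-- `Ω2(ξ) = Σ_{k=0}^n a_{2+3k} ξ^k`. -/
def Om2 (n : ℕ) (a : Fin (3*n+3) → ℝ) (ξ : ℝ) : ℝ :=
  ∑ k ∈ Finset.range (n+1), av n a (2+3*k) * ξ ^ k

/-- `Ω4(ξ) = Σ_{k=1}^n a_{1+3k} ξ^{k−1}`. -/
def Om4 (n : ℕ) (a : Fin (3*n+3) → ℝ) (ξ : ℝ) : ℝ :=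
  ∑ k ∈ Finset.Icc 1 n, av n a (1+3*k) * ξ ^ (k-1)

/-- `Ω6(ξ) = Σ_{k=1}^n a_{3+3k} ξ^{k−1}`. -/
def Om6 (n : ℕ) (a : Fin (3*n+3) → ℝ) (ξ : ℝ) : ℝ :=
  ∑ k ∈ Finset.Icc 1 n, av n a (3+3*k) * ξ ^ (k-1)

/-- `Δ(ξ) = (a₁/ω1)ξ − a₃/ω3`. -/
def Dlt (n : ℕ) (a : Fin (3*n+3) → ℝ) (ξ : ℝ) : ℝ :=
  av n a 1 / om1 n a * ξ - av n a 3 / om3 n a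

/-- `ξ* = (ω1 a₃)/(a₁ ω3)`. -/
def xistar (n : ℕ) (a : Fin (3*n+3) → ℝ) : ℝ :=
  om1 n a * av n a 3 / (av n a 1 * om3 n a)

/-- `F1(ξ) = Ω6(ξ)/ω3 − Ω4(ξ)/ω1`. -/
def F1 (n : ℕ) (a : Fin (3*n+3) → ℝ) (ξ : ℝ) : ℝ :=
  Om6 n a ξ / om3 n a - Om4 n a ξ / om1 n a

/-- `F3(ξ) = (a₁ξ/ω1)(Ω6(ξ)/ω3) − (a₃/ω3)(Ω4(ξ)/ω1)`. -/
def F3 (n : ℕ) (a : Fin (3*n+3) → ℝ) (ξ : ℝ) : ℝ :=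
  av n a 1 * ξ / om1 n a * (Om6 n a ξ / om3 n a) - av n a 3 / om3 n a * (Om4 n a ξ / om1 n a)

/-- `A(ξ) = (Ω4(ξ)+Ω6(ξ))Ω2(ξ)`. -/
def Ap (n : ℕ) (a : Fin (3*n+3) → ℝ) (ξ : ℝ) : ℝ := (Om4 n a ξ + Om6 n a ξ) * Om2 n a ξ

/-- `B(ξ) = (a₁ξ + a₃)Ω2(ξ) − ω2 ξ (Ω4(ξ)+Ω6(ξ))`. -/
def Bp (n : ℕ) (a : Fin (3*n+3) → ℝ) (ξ : ℝ) : ℝ :=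
  (av n a 1 * ξ + av n a 3) * Om2 n a ξ - om2 n a * ξ * (Om4 n a ξ + Om6 n a ξ)

/-- `C(ξ) = ξ(a₁ξ + a₃)(ω1+ω2+ω3)`. -/
def Cp (n : ℕ) (a : Fin (3*n+3) → ℝ) (ξ : ℝ) : ℝ :=
  ξ * (av n a 1 * ξ + av n a 3) * (om1 n a + om2 n a + om3 n a)

/-- `P(ξ) = A(ξ)Δ(ξ)² + B(ξ)Δ(ξ)F1(ξ) − C(ξ)F1(ξ)²`. -/
def Pp (n : ℕ) (a : Fin (3*n+3) → ℝ) (ξ : ℝ) : ℝ :=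
  Ap n a ξ * (Dlt n a ξ)^2 + Bp n a ξ * Dlt n a ξ * F1 n a ξ - Cp n a ξ * (F1 n a ξ)^2

/-- `θ(ξ) = 2C(ξ)F1(ξ) − Δ(ξ)[B(ξ) + (B(ξ)² + 4A(ξ)C(ξ))^{1/2}]`. -/
def thetaFun (n : ℕ) (a : Fin (3*n+3) → ℝ) (ξ : ℝ) : ℝ :=
  2 * Cp n a ξ * F1 n a ξ -
    Dlt n a ξ * (Bp n a ξ + Real.sqrt ((Bp n a ξ)^2 + 4 * Ap n a ξ * Cp n a ξ))

/-- `g1(ξ) = ξ^{1−n} F1(ξ)/Δ(ξ)`. -/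
def g1f (n : ℕ) (a : Fin (3*n+3) → ℝ) (ξ : ℝ) : ℝ :=
  ξ ^ ((1 : ℤ) - (n : ℤ)) * F1 n a ξ / Dlt n a ξ

/-- `g3(ξ) = ξ^{−1} F3(ξ)/Δ(ξ)`. -/
def g3f (n : ℕ) (a : Fin (3*n+3) → ℝ) (ξ : ℝ) : ℝ :=
  ξ⁻¹ * F3 n a ξ / Dlt n a ξ

/-- The candidate second steady state `b = diag(g^L) a` built from a zero `ξ`
of the determining equation, with `g = (g1(ξ), ξ, g3(ξ))`. -/
def bOf (n : ℕ) (a : Fin (3*n+3) → ℝ) (ξ : ℝ) : Fin (3*n+3) → ℝ :=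
  fun j => gL n ![g1f n a ξ, ξ, g3f n a ξ] j * a j

end

end Phos


/-!
The steady states of the network form the toric family `diag(g^L) a`: on the six reactions of
block `i` the exponents `Yᵀ L` are all `(0, i - 1, -1)`, so `Φ(g^L a) = g₂^(i-1) g₃⁻¹ Φ(a)`
there, `κ(a,λ) ⊙ Φ(g^L a)` lies in the image of `E`, and `S E = 0`. With `ξ = g₂`, the first and
third conservation laws `Z (g^L a) = Z a` are solved by `g₁ = g1(ξ)` and `g₃ = g3(ξ)`, and the
second one becomes the quadratic `A Δ² + B Δ F1 - C F1² = 0` in `F1 / Δ`; `θ(ξ) = 0` selects its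
positive root, which makes `g1(ξ)` and `g3(ξ)` positive. Since `b₆ / a₆ = ξ · b₃ / a₃`
(0-based indices), `b` determines `ξ`.
-/

theorem Finset.sum_range_mul_eq_sum_sum {M : Type*} [AddCommMonoid M] (f : ℕ → M) (k m : ℕ) :
    ∑ j ∈ range (k * m), f j = ∑ q ∈ range m, ∑ s ∈ range k, f (k * q + s) := by
  induction m with
  | zero => simp
  | succ m ih => rw [Nat.mul_succ, sum_range_add, ih, sum_range_succ]

theorem Real.add_sqrt_sq_add_mul_pos {A B C : ℝ} (hA : 0 < A) (hC : 0 < C) :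
    0 < B + √(B ^ 2 + 4 * A * C) := by
  have : |B| < √(B ^ 2 + 4 * A * C) := by
    rw [← Real.sqrt_sq_eq_abs]
    exact Real.sqrt_lt_sqrt (sq_nonneg B) (by nlinarith)
  linarith [neg_abs_le B]

/-- `F / Δ = (B + √(B² + 4AC)) / (2C)` is the positive root of `C t² - B t - A`. -/
theorem mul_pos_and_quadratic_eq_zero {A B C Δ F : ℝ} (hA : 0 < A) (hC : 0 < C) (hΔ : Δ ≠ 0)
    (h : 2 * C * F = Δ * (B + √(B ^ 2 + 4 * A * C))) :
    0 < F * Δ ∧ A * Δ ^ 2 + B * Δ * F - C * F ^ 2 = 0 := by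
  have hs := Real.sq_sqrt (show 0 ≤ B ^ 2 + 4 * A * C by nlinarith [sq_nonneg B])
  constructor
  · have : 2 * C * (F * Δ) = Δ ^ 2 * (B + √(B ^ 2 + 4 * A * C)) := by
      linear_combination Δ * h
    have := Real.add_sqrt_sq_add_mul_pos (B := B) hA hC
    have : 0 < Δ ^ 2 := by positivity
    nlinarith
  · have : 4 * C * (A * Δ ^ 2 + B * Δ * F - C * F ^ 2) = 0 := by
      linear_combination
        (-1) * (2 * C * F + Δ * (B + √(B ^ 2 + 4 * A * C)) - 2 * Δ * B) * h - Δ ^ 2 * hs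
    simpa [hC.ne'] using this

namespace Phos

open scoped Matrix

section Indices

variable {n : ℕ}

theorem prod_pow_eN {M : Type*} [CommMonoid M] {N : ℕ} (x : Fin N → M) {p : ℕ} (j : Fin N)
    (hp : (j : ℕ) + 1 = p) : ∏ m, x m ^ eN N p m = x j := by
  subst hp
  simp [eN, Fin.val_inj]

theorem av_succ (x : Fin (3*n+3) → ℝ) {j : ℕ} (h : j < 3*n+3) : av n x (j+1) = x ⟨j, h⟩ := by
  simp [av, h]

theorem sum_univ_eq_sum_range_triples (f : ℕ → ℝ) :
    ∑ j : Fin (3*n+3), f j = ∑ q ∈ range (n+1), (f (3*q) + f (3*q+1) + f (3*q+2)) := by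
  rw [Fin.sum_univ_eq_sum_range f, show 3*n+3 = 3*(n+1) by ring,
    sum_range_mul_eq_sum_sum]
  simp [sum_range_succ, add_assoc]

theorem gL_zero (g : Fin 3 → ℝ) : gL n g ⟨0, by omega⟩ = g 0 * g 1 ^ ((n:ℤ)-1) * (g 2)⁻¹ := by
  simp [gL, Fin.prod_univ_three, Lmat]

theorem gL_two (g : Fin 3 → ℝ) : gL n g ⟨2, by omega⟩ = g 0 * g 1 ^ ((n:ℤ)-2) * (g 2)⁻¹ := by
  simp [gL, Fin.prod_univ_three, Lmat]

theorem gL_three_mul (g : Fin 3 → ℝ) {k : ℕ} (hk : 1 ≤ k) (h : 3*k < 3*n+3) :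
    gL n g ⟨3*k, h⟩ = g 1 ^ ((k:ℤ)-2) * (g 2)⁻¹ := by
  simp [gL, Fin.prod_univ_three, Lmat, show k ≠ 0 by omega, show 3 * k ≠ 2 by omega]

theorem gL_three_mul_add_one (g : Fin 3 → ℝ) {k : ℕ} (h : 3*k+1 < 3*n+3) :
    gL n g ⟨3*k+1, h⟩ = (g 0)⁻¹ * g 1 ^ ((k:ℤ)-n) := by
  rcases Nat.eq_zero_or_pos k with rfl | hk
  · simp [gL, Fin.prod_univ_three, Lmat]
  · simp [gL, Fin.prod_univ_three, Lmat, show (3 * (k:ℤ) + 1) / 3 = k by omega, hk.ne',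
      show 3 * k + 1 ≠ 2 by omega]

theorem gL_three_mul_add_two (g : Fin 3 → ℝ) {k : ℕ} (hk : 1 ≤ k) (h : 3*k+2 < 3*n+3) :
    gL n g ⟨3*k+2, h⟩ = g 1 ^ ((k:ℤ)-2) * (g 2)⁻¹ := by
  simp [gL, Fin.prod_univ_three, Lmat, show (3 * (k:ℤ) + 2) / 3 = k by omega,
    show k ≠ 0 by omega]

theorem av_gL_mul (g : Fin 3 → ℝ) (x : Fin (3*n+3) → ℝ) {j : ℕ} (h : j < 3*n+3) :
    av n (gL n g * x) (j+1) = gL n g ⟨j, h⟩ * av n x (j+1) := by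
  simp [av_succ _ h]

theorem gL_pos {g : Fin 3 → ℝ} (hg : ∀ c, 0 < g c) (j : Fin (3*n+3)) : 0 < gL n g j :=
  prod_pos fun c _ => zpow_pos (hg c) _

end Indices

section SteadyState

variable {n : ℕ}

theorem Phi_gL (g : Fin 3 → ℝ) (hg0 : g 0 ≠ 0) (hg1 : g 1 ≠ 0) (r : Fin (6*n)) :
    Phi n (gL n g) r = g 1 ^ (((r:ℕ)/6 : ℕ) - 1 : ℤ) * (g 2)⁻¹ := by
  obtain ⟨i, hri⟩ : ∃ i, (r:ℕ) / 6 = i := ⟨_, rfl⟩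
  have hi : i < n := by omega
  have : (r:ℕ) % 6 < 6 := Nat.mod_lt _ (by norm_num)
  have h3 : 3*(i+1) < 3*n+3 := by omega
  have h5 : 3*(i+1)+2 < 3*n+3 := by omega
  interval_cases hs : (r:ℕ) % 6 <;>
    simp only [Phi, Ymat, Matrix.of_apply, Matrix.cons_val', Matrix.cons_val,
      Matrix.cons_val_fin_one, Matrix.cons_val_zero, Matrix.cons_val_one, Pi.add_apply,
      Fin.reduceFinMk, Fin.zero_eta, Fin.mk_one, Nat.succ_eq_add_one, Nat.reduceAdd, hri, hs,
      pow_add, prod_mul_distrib]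
  · rw [prod_pow_eN _ ⟨0, by omega⟩ (by simp), prod_pow_eN _ ⟨3*i+1, by omega⟩ (by simp; omega),
      gL_zero, gL_three_mul_add_one, show (i:ℤ) - 1 = ((n:ℤ)-1) + ((i:ℤ)-n) by ring,
      zpow_add₀ hg1]
    field_simp
  · rw [prod_pow_eN _ ⟨3*(i+1), h3⟩ (by simp; omega), gL_three_mul _ (by omega)]
    push_cast; ring_nf
  · rw [prod_pow_eN _ ⟨3*(i+1), h3⟩ (by simp; omega), gL_three_mul _ (by omega)]
    push_cast; ring_nf
  · rw [prod_pow_eN _ ⟨2, by omega⟩ (by simp),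
      prod_pow_eN _ ⟨3*(i+1)+1, by omega⟩ (by simp; omega), gL_two, gL_three_mul_add_one,
      show (i:ℤ) - 1 = ((n:ℤ)-2) + (((i+1:ℕ):ℤ)-n) by push_cast; ring, zpow_add₀ hg1]
    field_simp
  · rw [prod_pow_eN _ ⟨3*(i+1)+2, h5⟩ (by simp; omega), gL_three_mul_add_two _ (by omega)]
    push_cast; ring_nf
  · rw [prod_pow_eN _ ⟨3*(i+1)+2, h5⟩ (by simp; omega), gL_three_mul_add_two _ (by omega)]
    push_cast; ring_nf

theorem Smat_mul_Emat : Smat n * Emat n = 0 := by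
  ext m c
  let F : ℕ → ℝ := fun t => if h : t < 6 * n then Smat n m ⟨t, h⟩ * Emat n ⟨t, h⟩ c else 0
  have hF : ∑ r : Fin (6*n), Smat n m r * Emat n r c = ∑ t ∈ range (6*n), F t := by
    simp [sum_range, F]
  rw [Matrix.mul_apply, Matrix.zero_apply, hF, sum_range_mul_eq_sum_sum]
  refine sum_eq_zero fun q hq => ?_
  rw [mem_range] at hq
  have hdiv (s : ℕ) (hs : s < 6) : (6 * q + s) / 6 = q := by omega
  by_cases hqc : q = (c:ℕ) / 3
  · -- the columns of `E0` pick the reactions `1, 2`, `4, 5` and `1, 3, 4, 6` of block `q`,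
    -- whose reaction vectors sum to zero
    obtain h | h | h : (c:ℕ) % 3 = 0 ∨ (c:ℕ) % 3 = 1 ∨ (c:ℕ) % 3 = 2 := by omega
    all_goals simp [F, sum_range_succ, Smat, Emat, hdiv, hq, hqc.symm, h, E0,
      show ∀ s < 6, 6 * q + s < 6 * n by omega]
    all_goals ring
  · simp [F, sum_range_succ, Smat, Emat, hdiv, hq, hqc,
      show ∀ s < 6, 6 * q + s < 6 * n by omega]

theorem Phi_mul (x y : Fin (3*n+3) → ℝ) : Phi n (x * y) = Phi n x * Phi n y := by
  funext r
  simp [Phi, mul_pow, prod_mul_distrib]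

theorem isSteady_gL_mul {a : Fin (3*n+3) → ℝ} (ha : ∀ j, a j ≠ 0) {g : Fin 3 → ℝ}
    (hg0 : g 0 ≠ 0) (hg1 : g 1 ≠ 0) (lam : Fin (3*n) → ℝ) :
    isSteady n (kappaOf n a lam) (gL n g * a) := by
  have hflux : (fun r => kappaOf n a lam r * Phi n (gL n g * a) r) =
      Emat n *ᵥ fun c => g 1 ^ ((((c:ℕ)/3 : ℕ) : ℤ) - 1) * (g 2)⁻¹ * lam c := by
    funext r
    have hPa : Phi n a r ≠ 0 := prod_ne_zero_iff.mpr fun m _ => pow_ne_zero _ (ha m)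
    simp only [kappaOf, Phi_mul, Pi.mul_apply, Phi_gL g hg0 hg1, Matrix.mulVec, dotProduct]
    rw [mul_comm _ (Phi n a r), ← mul_assoc, div_mul_cancel₀ _ hPa, sum_mul]
    refine sum_congr rfl fun c _ => ?_
    by_cases hrc : (r:ℕ) / 6 = (c:ℕ) / 3
    · rw [hrc]; ring
    · simp [Emat, hrc]
  rw [isSteady, hflux, Matrix.mulVec_mulVec, Smat_mul_Emat, Matrix.zero_mulVec]

end SteadyState

section Conservation

variable {n : ℕ}

theorem Zmat_mulVec_zero (x : Fin (3*n+3) → ℝ) : (Zmat n *ᵥ x) 0 = om1 n x := by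
  have h (j : Fin (3*n+3)) : Zmat n 0 j * x j = if (j:ℕ) % 3 = 0 then av n x (j+1) else 0 := by
    simp [Zmat, av_succ x j.isLt]
  simp only [Matrix.mulVec, dotProduct, h]
  rw [sum_univ_eq_sum_range_triples (fun t => if t % 3 = 0 then av n x (t+1) else 0), om1]
  simp [Nat.add_mod, add_comm]

theorem Zmat_mulVec_one (x : Fin (3*n+3) → ℝ) : (Zmat n *ᵥ x) 1 = om2 n x := by
  have h (j : Fin (3*n+3)) : Zmat n 1 j * x j =
      (if (j:ℕ) % 3 = 1 then 1 else if (j:ℕ) = 0 ∨ (j:ℕ) = 2 then -1 else 0) * av n x (j+1) := by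
    simp [Zmat, av_succ x j.isLt]
  simp only [Matrix.mulVec, dotProduct, h]
  rw [sum_univ_eq_sum_range_triples (fun t =>
      (if t % 3 = 1 then 1 else if t = 0 ∨ t = 2 then -1 else 0) * av n x (t+1)),
    sum_range_succ', om2, sum_range_succ']
  simp [Nat.add_mod, Nat.mul_add]
  ring_nf

theorem Zmat_mulVec_two (x : Fin (3*n+3) → ℝ) : (Zmat n *ᵥ x) 2 = om3 n x := by
  have h (j : Fin (3*n+3)) : Zmat n 2 j * x j = if (j:ℕ) % 3 = 2 then av n x (j+1) else 0 := by
    simp [Zmat, av_succ x j.isLt]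
  simp only [Matrix.mulVec, dotProduct, h]
  rw [sum_univ_eq_sum_range_triples (fun t => if t % 3 = 2 then av n x (t+1) else 0), om3]
  simp only [Nat.mul_mod_right, OfNat.zero_ne_ofNat, ↓reduceIte, Nat.add_mod, Nat.one_mod,
    zero_add, OfNat.one_ne_ofNat, add_zero, Nat.mod_succ]
  ring_nf

theorem Om4_eq_sum_range (a : Fin (3*n+3) → ℝ) (ξ : ℝ) :
    Om4 n a ξ = ∑ k ∈ range n, av n a (1+3*(k+1)) * ξ^k := by
  rw [Om4, ← Ico_add_one_right_eq_Icc, sum_Ico_eq_sum_range]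
  simp [add_comm]

theorem Om6_eq_sum_range (a : Fin (3*n+3) → ℝ) (ξ : ℝ) :
    Om6 n a ξ = ∑ k ∈ range n, av n a (3+3*(k+1)) * ξ^k := by
  rw [Om6, ← Ico_add_one_right_eq_Icc, sum_Ico_eq_sum_range]
  simp [add_comm]

variable (a : Fin (3*n+3) → ℝ) {g : Fin 3 → ℝ}

theorem av_gL_mul_one :
    av n (gL n g * a) 1 = g 0 * g 1 ^ ((n:ℤ)-1) * (g 2)⁻¹ * av n a 1 := by
  rw [av_gL_mul g a (j := 0) (by omega), gL_zero]

theorem av_gL_mul_three (hg1 : g 1 ≠ 0) :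
    av n (gL n g * a) 3 = g 0 * g 1 ^ ((n:ℤ)-1) * (g 1)⁻¹ * (g 2)⁻¹ * av n a 3 := by
  rw [av_gL_mul g a (j := 2) (by omega), gL_two, show (n:ℤ) - 2 = (n - 1) + (-1) by ring,
    zpow_add₀ hg1, zpow_neg_one]
  simp only [Nat.reduceAdd]
  ring

theorem om1_gL_mul (hg1 : g 1 ≠ 0) :
    om1 n (gL n g * a) = g 0 * g 1 ^ ((n:ℤ)-1) * (g 2)⁻¹ * av n a 1
      + (g 1)⁻¹ * (g 2)⁻¹ * Om4 n a (g 1) := by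
  rw [om1, sum_range_succ', Om4_eq_sum_range, mul_sum, add_comm, av_gL_mul_one]
  congr 1
  refine sum_congr rfl fun k hk => ?_
  rw [show 1 + 3*(k+1) = 3*(k+1) + 1 by ring, av_gL_mul g a (by simp at hk; omega),
    gL_three_mul g (by omega), Nat.cast_succ, add_sub_assoc, zpow_add₀ hg1]
  norm_num
  ring

theorem om3_gL_mul (hg1 : g 1 ≠ 0) :
    om3 n (gL n g * a) = g 0 * g 1 ^ ((n:ℤ)-1) * (g 1)⁻¹ * (g 2)⁻¹ * av n a 3
      + (g 1)⁻¹ * (g 2)⁻¹ * Om6 n a (g 1) := by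
  rw [om3, sum_range_succ', Om6_eq_sum_range, mul_sum, add_comm, av_gL_mul_three a hg1]
  congr 1
  refine sum_congr rfl fun k hk => ?_
  rw [show 3 + 3*(k+1) = 3*(k+1) + 2 + 1 by ring, av_gL_mul g a (by simp at hk; omega),
    gL_three_mul_add_two g (by omega), Nat.cast_succ, add_sub_assoc, zpow_add₀ hg1]
  norm_num
  ring

theorem om2_gL_mul (hg1 : g 1 ≠ 0) :
    om2 n (gL n g * a) = -(g 0 * g 1 ^ ((n:ℤ)-1) * (g 2)⁻¹ * av n a 1)
      - g 0 * g 1 ^ ((n:ℤ)-1) * (g 1)⁻¹ * (g 2)⁻¹ * av n a 3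
      + (g 0 * g 1 ^ ((n:ℤ)-1))⁻¹ * (g 1)⁻¹ * Om2 n a (g 1) := by
  rw [om2, Om2, mul_sum, av_gL_mul_one, av_gL_mul_three a hg1]
  congr 1
  refine sum_congr rfl fun k hk => ?_
  rw [show 2 + 3*k = 3*k + 1 + 1 by ring, av_gL_mul g a (by simp at hk; omega),
    gL_three_mul_add_one g, show (k:ℤ) - n = k - (n - 1) - 1 by ring, zpow_sub₀ hg1,
    zpow_sub₀ hg1, zpow_natCast, zpow_one]
  field_simp

end Conservation

section Positivity

variable {n : ℕ} {a : Fin (3*n+3) → ℝ} {ξ : ℝ}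

theorem av_pos (ha : ∀ j, 0 < a j) {j : ℕ} (h : j - 1 < 3*n+3) : 0 < av n a j := by
  rw [av, dif_pos h]
  exact ha _

theorem om1_pos (ha : ∀ j, 0 < a j) : 0 < om1 n a :=
  sum_pos (fun k hk => av_pos ha (by simp at hk; omega)) nonempty_range_add_one

theorem om3_pos (ha : ∀ j, 0 < a j) : 0 < om3 n a :=
  sum_pos (fun k hk => av_pos ha (by simp at hk; omega)) nonempty_range_add_one

theorem Om2_pos (ha : ∀ j, 0 < a j) (hξ : 0 < ξ) : 0 < Om2 n a ξ :=
  sum_pos (fun k hk => mul_pos (av_pos ha (by simp at hk; omega)) (pow_pos hξ _))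
    nonempty_range_add_one

theorem Om4_pos (hn : 1 ≤ n) (ha : ∀ j, 0 < a j) (hξ : 0 < ξ) : 0 < Om4 n a ξ :=
  sum_pos (fun k hk => mul_pos (av_pos ha (by simp at hk; omega)) (pow_pos hξ _))
    (nonempty_Icc.mpr hn)

theorem Om6_pos (hn : 1 ≤ n) (ha : ∀ j, 0 < a j) (hξ : 0 < ξ) : 0 < Om6 n a ξ :=
  sum_pos (fun k hk => mul_pos (av_pos ha (by simp at hk; omega)) (pow_pos hξ _))
    (nonempty_Icc.mpr hn)

theorem om1_add_om2_add_om3_pos (ha : ∀ j, 0 < a j) : 0 < om1 n a + om2 n a + om3 n a := by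
  have h1 : 0 ≤ ∑ k ∈ range n, av n a (1+3*(k+1)) :=
    sum_nonneg fun k hk => (av_pos ha (by simp at hk; omega)).le
  have h2 : 0 < ∑ k ∈ range (n+1), av n a (2+3*k) :=
    sum_pos (fun k hk => av_pos ha (by simp at hk; omega)) nonempty_range_add_one
  have h3 : 0 ≤ ∑ k ∈ range n, av n a (3+3*(k+1)) :=
    sum_nonneg fun k hk => (av_pos ha (by simp at hk; omega)).le
  rw [om1, om2, om3, sum_range_succ', sum_range_succ' (fun k => av n a (3+3*k))]
  simp only [mul_zero, add_zero]
  linarith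

theorem Ap_pos (hn : 1 ≤ n) (ha : ∀ j, 0 < a j) (hξ : 0 < ξ) : 0 < Ap n a ξ :=
  mul_pos (add_pos (Om4_pos hn ha hξ) (Om6_pos hn ha hξ)) (Om2_pos ha hξ)

theorem Cp_pos (ha : ∀ j, 0 < a j) (hξ : 0 < ξ) : 0 < Cp n a ξ := by
  have := av_pos (n := n) ha (j := 1) (by omega)
  have := av_pos (n := n) ha (j := 3) (by omega)
  exact mul_pos (mul_pos hξ (by positivity)) (om1_add_om2_add_om3_pos ha)

theorem Dlt_ne_zero (ha : ∀ j, 0 < a j) (hne : ξ ≠ xistar n a) : Dlt n a ξ ≠ 0 := by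
  have := av_pos (n := n) ha (j := 1) (by omega)
  have := om1_pos ha
  have := om3_pos ha
  contrapose! hne
  rw [Dlt, sub_eq_zero] at hne
  rw [xistar]
  field_simp at hne ⊢
  linarith

end Positivity

section DeterminingEquation

variable {n : ℕ} {a : Fin (3*n+3) → ℝ} {ξ : ℝ}

theorem F1_mul_Dlt_pos_and_Pp_eq_zero (hn : 1 ≤ n) (ha : ∀ j, 0 < a j) (hξ : 0 < ξ)
    (hne : ξ ≠ xistar n a) (hθ : thetaFun n a ξ = 0) :
    0 < F1 n a ξ * Dlt n a ξ ∧ Pp n a ξ = 0 := by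
  rw [thetaFun, sub_eq_zero] at hθ
  exact mul_pos_and_quadratic_eq_zero (Ap_pos hn ha hξ) (Cp_pos ha hξ) (Dlt_ne_zero ha hne) hθ

theorem F3_mul_Dlt_pos (hn : 1 ≤ n) (ha : ∀ j, 0 < a j) (hξ : 0 < ξ) (hne : ξ ≠ xistar n a)
    (hF1 : 0 < F1 n a ξ * Dlt n a ξ) : 0 < F3 n a ξ * Dlt n a ξ := by
  have h3 := av_pos (n := n) ha (j := 3) (by omega)
  have hw1 := om1_pos ha
  have hw3 := om3_pos ha
  have hΔ : 0 < Dlt n a ξ ^ 2 := by have := Dlt_ne_zero ha hne; positivity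
  have key : om3 n a * (F3 n a ξ * Dlt n a ξ)
      = Om6 n a ξ * Dlt n a ξ ^ 2 + av n a 3 * (F1 n a ξ * Dlt n a ξ) := by
    rw [F3, F1, Dlt]
    field_simp
    ring
  have := Om6_pos hn ha hξ
  have : 0 < om3 n a * (F3 n a ξ * Dlt n a ξ) := by rw [key]; positivity
  exact pos_of_mul_pos_right this hw3.le

theorem g1f_pos_and_g3f_pos (hn : 1 ≤ n) (ha : ∀ j, 0 < a j) (hξ : 0 < ξ)
    (hne : ξ ≠ xistar n a) (hθ : thetaFun n a ξ = 0) : 0 < g1f n a ξ ∧ 0 < g3f n a ξ := by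
  have hF1 := (F1_mul_Dlt_pos_and_Pp_eq_zero hn ha hξ hne hθ).1
  have hF3 := F3_mul_Dlt_pos hn ha hξ hne hF1
  rw [g1f, g3f, mul_div_assoc, mul_div_assoc]
  exact ⟨mul_pos (zpow_pos hξ _) (div_pos_iff.mpr (mul_pos_iff.mp hF1)),
    mul_pos (inv_pos.mpr hξ) (div_pos_iff.mpr (mul_pos_iff.mp hF3))⟩

theorem bOf_eq : bOf n a ξ = gL n ![g1f n a ξ, ξ, g3f n a ξ] * a := rfl

theorem g1f_mul_zpow (hξ : ξ ≠ 0) : g1f n a ξ * ξ ^ ((n:ℤ)-1) = F1 n a ξ / Dlt n a ξ := by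
  rw [g1f, div_mul_eq_mul_div, mul_right_comm, ← zpow_add₀ hξ]
  norm_num

theorem om1_bOf (ha : ∀ j, 0 < a j) (hξ : ξ ≠ 0) (hΔ : Dlt n a ξ ≠ 0) (hF3 : F3 n a ξ ≠ 0) :
    om1 n (bOf n a ξ) = om1 n a := by
  have := (om1_pos ha).ne'
  have := (om3_pos ha).ne'
  rw [bOf_eq, om1_gL_mul a hξ]
  simp only [Matrix.cons_val_zero, Matrix.cons_val_one, Matrix.cons_val_two, Matrix.head_cons,
    Matrix.tail_cons]
  rw [g1f_mul_zpow hξ, g3f]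
  field_simp
  rw [F1, F3, Dlt]
  field_simp
  ring

theorem om3_bOf (ha : ∀ j, 0 < a j) (hξ : ξ ≠ 0) (hΔ : Dlt n a ξ ≠ 0) (hF3 : F3 n a ξ ≠ 0) :
    om3 n (bOf n a ξ) = om3 n a := by
  have := (om1_pos ha).ne'
  have := (om3_pos ha).ne'
  rw [bOf_eq, om3_gL_mul a hξ]
  simp only [Matrix.cons_val_zero, Matrix.cons_val_one, Matrix.cons_val_two, Matrix.head_cons,
    Matrix.tail_cons]
  rw [g1f_mul_zpow hξ, g3f]
  field_simp
  rw [F1, F3, Dlt]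
  field_simp
  ring

theorem om2_bOf (ha : ∀ j, 0 < a j) (hξ : ξ ≠ 0) (hΔ : Dlt n a ξ ≠ 0) (hF1 : F1 n a ξ ≠ 0)
    (hF3 : F3 n a ξ ≠ 0) (hP : Pp n a ξ = 0) :
    om2 n (bOf n a ξ) = om2 n a := by
  have := (om1_pos ha).ne'
  have := (om3_pos ha).ne'
  rw [bOf_eq, om2_gL_mul a hξ]
  simp only [Matrix.cons_val_zero, Matrix.cons_val_one, Matrix.cons_val_two, Matrix.head_cons,
    Matrix.tail_cons]
  rw [g1f_mul_zpow hξ, g3f]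
  field_simp
  have hw : om1 n a + om3 n a ≠ 0 := (add_pos (om1_pos ha) (om3_pos ha)).ne'
  -- cleared of denominators, the claim is `P(ξ) / (ω1 + ω3) = 0`
  rw [← sub_eq_zero]
  refine (mul_eq_zero.mp ?_).resolve_left hw
  rw [← hP, Pp, Ap, Bp, Cp, F3, F1, Dlt]
  field_simp
  ring

theorem Zmat_mulVec_bOf (hn : 1 ≤ n) (ha : ∀ j, 0 < a j) (hξ : 0 < ξ) (hne : ξ ≠ xistar n a)
    (hθ : thetaFun n a ξ = 0) : Zmat n *ᵥ bOf n a ξ = Zmat n *ᵥ a := by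
  obtain ⟨hF1, hP⟩ := F1_mul_Dlt_pos_and_Pp_eq_zero hn ha hξ hne hθ
  have hF3 := (F3_mul_Dlt_pos hn ha hξ hne hF1).ne'
  have hΔ := Dlt_ne_zero ha hne
  funext r
  fin_cases r
  · exact (Zmat_mulVec_zero _).trans ((om1_bOf ha hξ.ne' hΔ (left_ne_zero_of_mul hF3)).trans
      (Zmat_mulVec_zero _).symm)
  · exact (Zmat_mulVec_one _).trans ((om2_bOf ha hξ.ne' hΔ (left_ne_zero_of_mul hF1.ne')
      (left_ne_zero_of_mul hF3) hP).trans (Zmat_mulVec_one _).symm)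
  · exact (Zmat_mulVec_two _).trans ((om3_bOf ha hξ.ne' hΔ (left_ne_zero_of_mul hF3)).trans
      (Zmat_mulVec_two _).symm)

theorem xi_eq_bOf_ratio (hn : 2 ≤ n) (ha : ∀ j, a j ≠ 0) (hξ : ξ ≠ 0) (hg3 : g3f n a ξ ≠ 0) :
    ξ = bOf n a ξ ⟨6, by omega⟩ / a ⟨6, by omega⟩
      / (bOf n a ξ ⟨3, by omega⟩ / a ⟨3, by omega⟩) := by
  have h3 := gL_three_mul (n := n) ![g1f n a ξ, ξ, g3f n a ξ] (k := 1) le_rfl (by omega)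
  have h6 := gL_three_mul (n := n) ![g1f n a ξ, ξ, g3f n a ξ] (k := 2) (by omega) (by omega)
  simp only [Nat.mul_one, Nat.reduceMul] at h3 h6
  rw [bOf_eq, Pi.mul_apply, Pi.mul_apply, h3, h6]
  simp only [Matrix.cons_val_one, Matrix.cons_val_zero, Nat.cast_ofNat, sub_self, zpow_ofNat,
    pow_zero, Matrix.cons_val, one_mul, Nat.cast_one, Int.reduceSub, zpow_neg, pow_one]
  field_simp [ha]

end DeterminingEquation

theorem determining_equation_general (n : ℕ) (hn : 2 ≤ n)
    (a : Fin (3*n+3) → ℝ) (ha : ∀ j, 0 < a j)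
    (lam : Fin (3*n) → ℝ)
    (ξ : ℝ) (hξ : 0 < ξ) (hne : ξ ≠ xistar n a) (hθ : thetaFun n a ξ = 0) :
    (∀ i, 0 < (![g1f n a ξ, ξ, g3f n a ξ] : Fin 3 → ℝ) i) ∧
    (∀ j, 0 < bOf n a ξ j) ∧
    isSteady n (kappaOf n a lam) (bOf n a ξ) ∧
    (Zmat n).mulVec (bOf n a ξ) = (Zmat n).mulVec a ∧
    (ξ ≠ 1 → bOf n a ξ ≠ a) ∧
    (∀ ξ' : ℝ, 0 < ξ' → ξ' ≠ xistar n a → thetaFun n a ξ' = 0 → ξ' ≠ ξ →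
      bOf n a ξ' ≠ bOf n a ξ) := by
  have hn1 : 1 ≤ n := by omega
  have hg : ∀ i, 0 < (![g1f n a ξ, ξ, g3f n a ξ] : Fin 3 → ℝ) i := by
    obtain ⟨hg1, hg3⟩ := g1f_pos_and_g3f_pos hn1 ha hξ hne hθ
    intro i
    fin_cases i
    exacts [hg1, hξ, hg3]
  have hratio {ξ' : ℝ} (hξ' : 0 < ξ') (hne' : ξ' ≠ xistar n a) (hθ' : thetaFun n a ξ' = 0) :=
    xi_eq_bOf_ratio hn (fun j => (ha j).ne') hξ'.ne'
      (g1f_pos_and_g3f_pos hn1 ha hξ' hne' hθ').2.ne'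
  refine ⟨hg, fun j => mul_pos (gL_pos hg j) (ha j),
    isSteady_gL_mul (fun j => (ha j).ne') (hg 0).ne' (hg 1).ne' lam,
    Zmat_mulVec_bOf hn1 ha hξ hne hθ, fun h1 hb => h1 ?_,
    fun ξ' hξ' hne' hθ' hξξ' hb => hξξ' ?_⟩
  · rw [hratio hξ hne hθ, hb]
    simp [div_self, fun j => (ha j).ne']
  · rw [hratio hξ' hne' hθ', hb, ← hratio hξ hne hθ]

/-- (Determining equation.) If `ξ > 0`, `ξ ≠ ξ*` and
`θ(ξ) = 0`, then `g = (g1(ξ), ξ, g3(ξ))` is positive and `b = diag(g^L) a`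
is a positive steady state of `ẋ = S diag(κ(a,λ)) Φ(x)` with `Z b = Z a`;
if `ξ ≠ 1` then `b ≠ a`; and distinct such zeros of `θ` yield distinct
steady states. -/
theorem determining_equation (n : ℕ) (hn : 2 ≤ n)
    (a : Fin (3*n+3) → ℝ) (ha : ∀ j, 0 < a j)
    (lam : Fin (3*n) → ℝ) (hlam : ∀ c, 0 < lam c)
    (ξ : ℝ) (hξ : 0 < ξ) (hne : ξ ≠ xistar n a) (hθ : thetaFun n a ξ = 0) :
    (∀ i, 0 < (![g1f n a ξ, ξ, g3f n a ξ] : Fin 3 → ℝ) i) ∧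
    (∀ j, 0 < bOf n a ξ j) ∧
    isSteady n (kappaOf n a lam) (bOf n a ξ) ∧
    (Zmat n).mulVec (bOf n a ξ) = (Zmat n).mulVec a ∧
    (ξ ≠ 1 → bOf n a ξ ≠ a) ∧
    (∀ ξ' : ℝ, 0 < ξ' → ξ' ≠ xistar n a → thetaFun n a ξ' = 0 → ξ' ≠ ξ →
      bOf n a ξ' ≠ bOf n a ξ) :=
  determining_equation_general n hn a ha lam ξ hξ hne hθ

end Phos
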